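/- arXiv:math/0701055 — 3 statements merged into one kernel-verified Lean document; each statement's English description precedes it below -/
import Mathlib

section
/- For every n ≥ 0 and all z, w ∈ ℂ, the Poisson brackets {Φ_n(z), Φ_n(w)} = 0 and {Ψ_n(z), Ψ_n(w)} = 0. -/
open Complex

/-- Derivative of `f` in the direction of the real part of the `k`-th variable α_k. -/
noncomputable def duDeriv (k : ℕ) (f : (ℕ → ℂ) → ℂ) (a : ℕ → ℂ) : ℂ :=
  deriv (fun t : ℝ => f (Function.update a k (a k + (t : ℂ)))) 0

/-- Derivative of `f` in the direction of the imaginary part of the `k`-th variable α_k. -/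
noncomputable def dvDeriv (k : ℕ) (f : (ℕ → ℂ) → ℂ) (a : ℕ → ℂ) : ℂ :=
  deriv (fun t : ℝ => f (Function.update a k (a k + (t : ℂ) * Complex.I))) 0

/-- Wirtinger derivative ∂f/∂α_k = (1/2)(∂/∂u_k − i·∂/∂v_k). -/
noncomputable def dAlpha (k : ℕ) (f : (ℕ → ℂ) → ℂ) (a : ℕ → ℂ) : ℂ :=
  (1 / 2) * (duDeriv k f a - Complex.I * dvDeriv k f a)

/-- Wirtinger derivative ∂f/∂conj(α_k) = (1/2)(∂/∂u_k + i·∂/∂v_k). -/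
noncomputable def dAlphaBar (k : ℕ) (f : (ℕ → ℂ) → ℂ) (a : ℕ → ℂ) : ℂ :=
  (1 / 2) * (duDeriv k f a + Complex.I * dvDeriv k f a)

/-- The Poisson bracket
{f,g} = i·Σ_k (1 − |α_k|²)·[(∂f/∂conj(α_k))·(∂g/∂α_k) − (∂f/∂α_k)·(∂g/∂conj(α_k))]. -/
noncomputable def pb (f g : (ℕ → ℂ) → ℂ) (a : ℕ → ℂ) : ℂ :=
  Complex.I * ∑' k : ℕ, (1 - (Complex.normSq (a k) : ℂ)) *
    (dAlphaBar k f a * dAlpha k g a - dAlpha k f a * dAlphaBar k g a)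

/-- The pair (Φ_n(z), Φ_n^*(z)) as a function of the Verblunsky coefficients:
Φ_0 = Φ_0^* = 1, Φ_{n+1}(z) = z·Φ_n(z) − conj(α_n)·Φ_n^*(z),
Φ_{n+1}^*(z) = Φ_n^*(z) − α_n·z·Φ_n(z). -/
noncomputable def PhiP : ℕ → ℂ → (ℕ → ℂ) → ℂ × ℂ
  | 0, _, _ => (1, 1)
  | n + 1, z, a =>
      (z * (PhiP n z a).1 - (starRingEnd ℂ) (a n) * (PhiP n z a).2,
       (PhiP n z a).2 - a n * z * (PhiP n z a).1)

/-- The monic orthogonal polynomial Φ_n(z). -/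
noncomputable def Phi (n : ℕ) (z : ℂ) (a : ℕ → ℂ) : ℂ := (PhiP n z a).1

/-- The reversed polynomial Φ_n^*(z). -/
noncomputable def PhiStar (n : ℕ) (z : ℂ) (a : ℕ → ℂ) : ℂ := (PhiP n z a).2

/-- The second kind polynomial Ψ_n(z): same recurrence with every α_k replaced by −α_k. -/
noncomputable def Psi (n : ℕ) (z : ℂ) (a : ℕ → ℂ) : ℂ := Phi n z (fun k => - a k)

/-- The reversed second kind polynomial Ψ_n^*(z). -/
noncomputable def PsiStar (n : ℕ) (z : ℂ) (a : ℕ → ℂ) : ℂ := PhiStar n z (fun k => - a k)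

/-! ### Auxiliary development -/

/-- The Wirtinger derivatives `((∂Φ, ∂̄Φ), (∂Φ*, ∂̄Φ*))` with respect to α_k,
computed by the same recursion as `PhiP`. -/
noncomputable def WD : ℕ → ℂ → ℕ → (ℕ → ℂ) → (ℂ × ℂ) × (ℂ × ℂ)
  | 0, _, _, _ => 0
  | n + 1, z, k, a =>
      ((z * (WD n z k a).1.1 - (starRingEnd ℂ) (a n) * (WD n z k a).2.1,
        z * (WD n z k a).1.2 - (if k = n then (PhiP n z a).2 else 0)
          - (starRingEnd ℂ) (a n) * (WD n z k a).2.2),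
       ((WD n z k a).2.1 - (if k = n then z * (PhiP n z a).1 else 0)
          - a n * z * (WD n z k a).1.1,
        (WD n z k a).2.2 - a n * z * (WD n z k a).1.2))

lemma WD_zero (n : ℕ) (z : ℂ) (k : ℕ) (a : ℕ → ℂ) (h : n ≤ k) : WD n z k a = 0 := by
  induction n with
  | zero => rfl
  | succ n ih =>
    have hkn : k ≠ n := fun he => by omega
    have h0 : WD n z k a = 0 := ih (by omega)
    simp [WD, h0, hkn]

lemma coord_u (a : ℕ → ℂ) (k n : ℕ) :
    HasDerivAt (fun t : ℝ => Function.update a k (a k + (t : ℂ)) n)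
      (if k = n then 1 else 0) 0 := by
  rcases eq_or_ne k n with h | h
  · subst h
    simp only [Function.update_self, if_pos rfl]
    simpa using (Complex.ofRealCLM.hasDerivAt (x := (0 : ℝ))).const_add (a k)
  · simp only [Function.update_of_ne h.symm, if_neg h]
    exact hasDerivAt_const _ _

lemma coord_uc (a : ℕ → ℂ) (k n : ℕ) :
    HasDerivAt (fun t : ℝ => (starRingEnd ℂ) (Function.update a k (a k + (t : ℂ)) n))
      (if k = n then 1 else 0) 0 := by
  rcases eq_or_ne k n with h | h
  · subst h
    simp only [Function.update_self, map_add, Complex.conj_ofReal, if_pos rfl]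
    simpa using (Complex.ofRealCLM.hasDerivAt (x := (0 : ℝ))).const_add ((starRingEnd ℂ) (a k))
  · simp only [Function.update_of_ne h.symm, if_neg h]
    exact hasDerivAt_const _ _

lemma coord_v (a : ℕ → ℂ) (k n : ℕ) :
    HasDerivAt (fun t : ℝ => Function.update a k (a k + (t : ℂ) * Complex.I) n)
      (if k = n then Complex.I else 0) 0 := by
  rcases eq_or_ne k n with h | h
  · subst h
    simp only [Function.update_self, if_pos rfl]
    simpa using ((Complex.ofRealCLM.hasDerivAt (x := (0 : ℝ))).mul_const Complex.I).const_add (a k)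
  · simp only [Function.update_of_ne h.symm, if_neg h]
    exact hasDerivAt_const _ _

lemma coord_vc (a : ℕ → ℂ) (k n : ℕ) :
    HasDerivAt (fun t : ℝ => (starRingEnd ℂ) (Function.update a k (a k + (t : ℂ) * Complex.I) n))
      (if k = n then -Complex.I else 0) 0 := by
  rcases eq_or_ne k n with h | h
  · subst h
    simp only [Function.update_self, map_add, map_mul, Complex.conj_ofReal, Complex.conj_I,
      if_pos rfl]
    simpa using ((Complex.ofRealCLM.hasDerivAt (x := (0 : ℝ))).mul_const
      (-Complex.I)).const_add ((starRingEnd ℂ) (a k))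
  · simp only [Function.update_of_ne h.symm, if_neg h]
    exact hasDerivAt_const _ _

lemma hasW (z : ℂ) (k : ℕ) (a : ℕ → ℂ) (n : ℕ) :
    HasDerivAt (fun t : ℝ => (PhiP n z (Function.update a k (a k + (t : ℂ)))).1)
      ((WD n z k a).1.1 + (WD n z k a).1.2) 0 ∧
    HasDerivAt (fun t : ℝ => (PhiP n z (Function.update a k (a k + (t : ℂ)))).2)
      ((WD n z k a).2.1 + (WD n z k a).2.2) 0 ∧
    HasDerivAt (fun t : ℝ => (PhiP n z (Function.update a k (a k + (t : ℂ) * Complex.I))).1)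
      (Complex.I * (WD n z k a).1.1 - Complex.I * (WD n z k a).1.2) 0 ∧
    HasDerivAt (fun t : ℝ => (PhiP n z (Function.update a k (a k + (t : ℂ) * Complex.I))).2)
      (Complex.I * (WD n z k a).2.1 - Complex.I * (WD n z k a).2.2) 0 := by
  induction n with
  | zero =>
    refine ⟨?_, ?_, ?_, ?_⟩ <;> simpa [PhiP, WD] using hasDerivAt_const (0 : ℝ) (1 : ℂ)
  | succ n ih =>
    obtain ⟨h1, h2, h3, h4⟩ := ih
    refine ⟨?_, ?_, ?_, ?_⟩
    · have H := (h1.const_mul z).sub ((coord_uc a k n).mul h2)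
      simp only [Complex.ofReal_zero, add_zero, Function.update_eq_self] at H
      have hfun : (fun t : ℝ => (PhiP (n + 1) z (Function.update a k (a k + (t : ℂ)))).1)
          = (fun t : ℝ => z * (PhiP n z (Function.update a k (a k + (t : ℂ)))).1
              - (starRingEnd ℂ) (Function.update a k (a k + (t : ℂ)) n)
                * (PhiP n z (Function.update a k (a k + (t : ℂ)))).2) := by
        funext t; simp [PhiP]
      have hd : (WD (n + 1) z k a).1.1 + (WD (n + 1) z k a).1.2
          = z * ((WD n z k a).1.1 + (WD n z k a).1.2)
            - ((if k = n then 1 else 0) * (PhiP n z a).2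
              + (starRingEnd ℂ) (a n) * ((WD n z k a).2.1 + (WD n z k a).2.2)) := by
        simp only [WD]; split_ifs <;> ring
      rw [hfun, hd]; exact H
    · have H := h2.sub (((coord_u a k n).mul_const z).mul h1)
      simp only [Complex.ofReal_zero, add_zero, Function.update_eq_self] at H
      have hfun : (fun t : ℝ => (PhiP (n + 1) z (Function.update a k (a k + (t : ℂ)))).2)
          = (fun t : ℝ => (PhiP n z (Function.update a k (a k + (t : ℂ)))).2
              - (Function.update a k (a k + (t : ℂ)) n) * z
                * (PhiP n z (Function.update a k (a k + (t : ℂ)))).1) := by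
        funext t; simp [PhiP]
      have hd : (WD (n + 1) z k a).2.1 + (WD (n + 1) z k a).2.2
          = ((WD n z k a).2.1 + (WD n z k a).2.2)
            - ((if k = n then 1 else 0) * z * (PhiP n z a).1
              + a n * z * ((WD n z k a).1.1 + (WD n z k a).1.2)) := by
        simp only [WD]; split_ifs <;> ring
      rw [hfun, hd]; exact H
    · have H := (h3.const_mul z).sub ((coord_vc a k n).mul h4)
      simp only [Complex.ofReal_zero, zero_mul, add_zero, Function.update_eq_self] at H
      have hfun : (fun t : ℝ => (PhiP (n + 1) z
            (Function.update a k (a k + (t : ℂ) * Complex.I))).1)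
          = (fun t : ℝ => z * (PhiP n z (Function.update a k (a k + (t : ℂ) * Complex.I))).1
              - (starRingEnd ℂ) (Function.update a k (a k + (t : ℂ) * Complex.I) n)
                * (PhiP n z (Function.update a k (a k + (t : ℂ) * Complex.I))).2) := by
        funext t; simp [PhiP]
      have hd : Complex.I * (WD (n + 1) z k a).1.1 - Complex.I * (WD (n + 1) z k a).1.2
          = z * (Complex.I * (WD n z k a).1.1 - Complex.I * (WD n z k a).1.2)
            - ((if k = n then -Complex.I else 0) * (PhiP n z a).2
              + (starRingEnd ℂ) (a n)
                * (Complex.I * (WD n z k a).2.1 - Complex.I * (WD n z k a).2.2)) := by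
        simp only [WD]; split_ifs <;> ring
      rw [hfun, hd]; exact H
    · have H := h4.sub (((coord_v a k n).mul_const z).mul h3)
      simp only [Complex.ofReal_zero, zero_mul, add_zero, Function.update_eq_self] at H
      have hfun : (fun t : ℝ => (PhiP (n + 1) z
            (Function.update a k (a k + (t : ℂ) * Complex.I))).2)
          = (fun t : ℝ => (PhiP n z (Function.update a k (a k + (t : ℂ) * Complex.I))).2
              - (Function.update a k (a k + (t : ℂ) * Complex.I) n) * z
                * (PhiP n z (Function.update a k (a k + (t : ℂ) * Complex.I))).1) := by
        funext t; simp [PhiP]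
      have hd : Complex.I * (WD (n + 1) z k a).2.1 - Complex.I * (WD (n + 1) z k a).2.2
          = (Complex.I * (WD n z k a).2.1 - Complex.I * (WD n z k a).2.2)
            - ((if k = n then Complex.I else 0) * z * (PhiP n z a).1
              + a n * z * (Complex.I * (WD n z k a).1.1 - Complex.I * (WD n z k a).1.2)) := by
        simp only [WD]; split_ifs <;> ring
      rw [hfun, hd]; exact H

lemma wirtA (x y : ℂ) :
    (1 / 2 : ℂ) * ((x + y) - Complex.I * (Complex.I * x - Complex.I * y)) = x := by
  linear_combination (-(x - y) / 2) * Complex.I_mul_I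

lemma wirtB (x y : ℂ) :
    (1 / 2 : ℂ) * ((x + y) + Complex.I * (Complex.I * x - Complex.I * y)) = y := by
  linear_combination ((x - y) / 2) * Complex.I_mul_I

lemma dAlpha_Phi (n : ℕ) (z : ℂ) (k : ℕ) (a : ℕ → ℂ) :
    dAlpha k (Phi n z) a = (WD n z k a).1.1 := by
  obtain ⟨h1, _, h3, _⟩ := hasW z k a n
  unfold dAlpha duDeriv dvDeriv
  simp only [Phi]
  rw [h1.deriv, h3.deriv]
  exact wirtA _ _

lemma dAlphaBar_Phi (n : ℕ) (z : ℂ) (k : ℕ) (a : ℕ → ℂ) :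
    dAlphaBar k (Phi n z) a = (WD n z k a).1.2 := by
  obtain ⟨h1, _, h3, _⟩ := hasW z k a n
  unfold dAlphaBar duDeriv dvDeriv
  simp only [Phi]
  rw [h1.deriv, h3.deriv]
  exact wirtB _ _

/-! ### The finite sums and their recursions -/

noncomputable def XS (n : ℕ) (z w : ℂ) (a : ℕ → ℂ) : ℂ :=
  ∑ k ∈ Finset.range n, (1 - (Complex.normSq (a k) : ℂ)) *
    ((WD n z k a).1.2 * (WD n w k a).1.1 - (WD n z k a).1.1 * (WD n w k a).1.2)

noncomputable def YS (n : ℕ) (z w : ℂ) (a : ℕ → ℂ) : ℂ :=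
  ∑ k ∈ Finset.range n, (1 - (Complex.normSq (a k) : ℂ)) *
    ((WD n z k a).1.2 * (WD n w k a).2.1 - (WD n z k a).1.1 * (WD n w k a).2.2)

noncomputable def YpS (n : ℕ) (z w : ℂ) (a : ℕ → ℂ) : ℂ :=
  ∑ k ∈ Finset.range n, (1 - (Complex.normSq (a k) : ℂ)) *
    ((WD n z k a).2.2 * (WD n w k a).1.1 - (WD n z k a).2.1 * (WD n w k a).1.2)

noncomputable def ZS (n : ℕ) (z w : ℂ) (a : ℕ → ℂ) : ℂ :=
  ∑ k ∈ Finset.range n, (1 - (Complex.normSq (a k) : ℂ)) *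
    ((WD n z k a).2.2 * (WD n w k a).2.1 - (WD n z k a).2.1 * (WD n w k a).2.2)

lemma stepX (n : ℕ) (z w : ℂ) (a : ℕ → ℂ) :
    XS (n + 1) z w a = z * w * XS n z w a - z * (starRingEnd ℂ) (a n) * YS n z w a
      - w * (starRingEnd ℂ) (a n) * YpS n z w a
      + ((starRingEnd ℂ) (a n)) ^ 2 * ZS n z w a := by
  have e1 : WD n z n a = 0 := WD_zero n z n a le_rfl
  have e2 : WD n w n a = 0 := WD_zero n w n a le_rfl
  unfold XS YS YpS ZS
  rw [Finset.sum_range_succ]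
  have hb : (1 - (Complex.normSq (a n) : ℂ)) *
      ((WD (n+1) z n a).1.2 * (WD (n+1) w n a).1.1
        - (WD (n+1) z n a).1.1 * (WD (n+1) w n a).1.2) = 0 := by
    simp [WD, e1, e2]
  rw [hb, add_zero, Finset.mul_sum, Finset.mul_sum, Finset.mul_sum, Finset.mul_sum,
    ← Finset.sum_sub_distrib, ← Finset.sum_sub_distrib, ← Finset.sum_add_distrib]
  refine Finset.sum_congr rfl fun k hk => ?_
  have hkn : k ≠ n := Nat.ne_of_lt (Finset.mem_range.mp hk)
  simp only [WD, if_neg hkn]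
  ring

lemma stepY (n : ℕ) (z w : ℂ) (a : ℕ → ℂ) :
    YS (n + 1) z w a = z * YS n z w a - z * w * (a n) * XS n z w a
      - (starRingEnd ℂ) (a n) * ZS n z w a
      + (a n * (starRingEnd ℂ) (a n) * w) * YpS n z w a
      + (1 - (Complex.normSq (a n) : ℂ)) * w * (PhiP n z a).2 * (PhiP n w a).1 := by
  have e1 : WD n z n a = 0 := WD_zero n z n a le_rfl
  have e2 : WD n w n a = 0 := WD_zero n w n a le_rfl
  have hb : (1 - (Complex.normSq (a n) : ℂ)) *
      ((WD (n+1) z n a).1.2 * (WD (n+1) w n a).2.1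
        - (WD (n+1) z n a).1.1 * (WD (n+1) w n a).2.2)
      = (1 - (Complex.normSq (a n) : ℂ)) * w * (PhiP n z a).2 * (PhiP n w a).1 := by
    simp [WD, e1, e2]; ring
  have hs : ∑ k ∈ Finset.range n, (1 - (Complex.normSq (a k) : ℂ)) *
      ((WD (n+1) z k a).1.2 * (WD (n+1) w k a).2.1
        - (WD (n+1) z k a).1.1 * (WD (n+1) w k a).2.2)
      = z * YS n z w a - z * w * (a n) * XS n z w a
        - (starRingEnd ℂ) (a n) * ZS n z w a
        + (a n * (starRingEnd ℂ) (a n) * w) * YpS n z w a := by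
    unfold XS YS YpS ZS
    rw [Finset.mul_sum, Finset.mul_sum, Finset.mul_sum, Finset.mul_sum,
      ← Finset.sum_sub_distrib, ← Finset.sum_sub_distrib, ← Finset.sum_add_distrib]
    refine Finset.sum_congr rfl fun k hk => ?_
    have hkn : k ≠ n := Nat.ne_of_lt (Finset.mem_range.mp hk)
    simp only [WD, if_neg hkn]
    ring
  unfold YS
  rw [Finset.sum_range_succ, hb]
  unfold YS at hs
  rw [hs]

lemma stepYp (n : ℕ) (z w : ℂ) (a : ℕ → ℂ) :
    YpS (n + 1) z w a = w * YpS n z w a - z * w * (a n) * XS n z w a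
      - (starRingEnd ℂ) (a n) * ZS n z w a
      + (a n * (starRingEnd ℂ) (a n) * z) * YS n z w a
      - (1 - (Complex.normSq (a n) : ℂ)) * z * (PhiP n z a).1 * (PhiP n w a).2 := by
  have e1 : WD n z n a = 0 := WD_zero n z n a le_rfl
  have e2 : WD n w n a = 0 := WD_zero n w n a le_rfl
  have hb : (1 - (Complex.normSq (a n) : ℂ)) *
      ((WD (n+1) z n a).2.2 * (WD (n+1) w n a).1.1
        - (WD (n+1) z n a).2.1 * (WD (n+1) w n a).1.2)
      = -((1 - (Complex.normSq (a n) : ℂ)) * z * (PhiP n z a).1 * (PhiP n w a).2) := by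
    simp [WD, e1, e2]; ring
  have hs : ∑ k ∈ Finset.range n, (1 - (Complex.normSq (a k) : ℂ)) *
      ((WD (n+1) z k a).2.2 * (WD (n+1) w k a).1.1
        - (WD (n+1) z k a).2.1 * (WD (n+1) w k a).1.2)
      = w * YpS n z w a - z * w * (a n) * XS n z w a
        - (starRingEnd ℂ) (a n) * ZS n z w a
        + (a n * (starRingEnd ℂ) (a n) * z) * YS n z w a := by
    unfold XS YS YpS ZS
    rw [Finset.mul_sum, Finset.mul_sum, Finset.mul_sum, Finset.mul_sum,
      ← Finset.sum_sub_distrib, ← Finset.sum_sub_distrib, ← Finset.sum_add_distrib]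
    refine Finset.sum_congr rfl fun k hk => ?_
    have hkn : k ≠ n := Nat.ne_of_lt (Finset.mem_range.mp hk)
    simp only [WD, if_neg hkn]
    ring
  unfold YpS
  rw [Finset.sum_range_succ, hb]
  unfold YpS at hs
  rw [hs]
  ring

lemma stepZ (n : ℕ) (z w : ℂ) (a : ℕ → ℂ) :
    ZS (n + 1) z w a = ZS n z w a - (a n) * w * YpS n z w a - (a n) * z * YS n z w a
      + (a n) ^ 2 * z * w * XS n z w a := by
  have e1 : WD n z n a = 0 := WD_zero n z n a le_rfl
  have e2 : WD n w n a = 0 := WD_zero n w n a le_rfl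
  unfold XS YS YpS ZS
  rw [Finset.sum_range_succ]
  have hb : (1 - (Complex.normSq (a n) : ℂ)) *
      ((WD (n+1) z n a).2.2 * (WD (n+1) w n a).2.1
        - (WD (n+1) z n a).2.1 * (WD (n+1) w n a).2.2) = 0 := by
    simp [WD, e1, e2]
  rw [hb, add_zero, Finset.mul_sum, Finset.mul_sum, Finset.mul_sum,
    ← Finset.sum_sub_distrib, ← Finset.sum_sub_distrib, ← Finset.sum_add_distrib]
  refine Finset.sum_congr rfl fun k hk => ?_
  have hkn : k ≠ n := Nat.ne_of_lt (Finset.mem_range.mp hk)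
  simp only [WD, if_neg hkn]
  ring

lemma stepD (n : ℕ) (z w : ℂ) (a : ℕ → ℂ) :
    (PhiP (n+1) z a).1 * (PhiP (n+1) w a).2 - (PhiP (n+1) z a).2 * (PhiP (n+1) w a).1
      = (1 - (Complex.normSq (a n) : ℂ)) *
        (z * (PhiP n z a).1 * (PhiP n w a).2 - w * (PhiP n z a).2 * (PhiP n w a).1) := by
  simp only [PhiP]
  linear_combination (-(z * (PhiP n z a).1 * (PhiP n w a).2)
    + w * (PhiP n z a).2 * (PhiP n w a).1) * Complex.mul_conj (a n)

lemma key (z w : ℂ) (n : ℕ) (a : ℕ → ℂ) :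
    XS n z w a = 0 ∧ ZS n z w a = 0 ∧
    z * YS n z w a + w * YpS n z w a = 0 ∧
    (z - w) * YS n z w a
      = w * ((PhiP n z a).1 * (PhiP n w a).2 - (PhiP n z a).2 * (PhiP n w a).1) := by
  induction n with
  | zero => simp [XS, YS, YpS, ZS, PhiP]
  | succ n ih =>
    obtain ⟨hX, hZ, hY, hD⟩ := ih
    have mc := Complex.mul_conj (a n)
    set Dx := (PhiP n z a).1 * (PhiP n w a).2 - (PhiP n z a).2 * (PhiP n w a).1 with hDx
    refine ⟨?_, ?_, ?_, ?_⟩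
    · rw [stepX]
      linear_combination (z * w) * hX + ((starRingEnd ℂ) (a n)) ^ 2 * hZ
        + (-(starRingEnd ℂ) (a n)) * hY
    · rw [stepZ]
      linear_combination hZ + ((a n) ^ 2 * z * w) * hX + (-(a n)) * hY
    · rw [stepY, stepYp]
      linear_combination ((a n) * (starRingEnd ℂ) (a n) * z + w) * hY
        + (-(z ^ 2 * w * (a n)) - z * w ^ 2 * (a n)) * hX
        + (-(z * (starRingEnd ℂ) (a n)) - w * (starRingEnd ℂ) (a n)) * hZ
        + ((1 - (a n) * (starRingEnd ℂ) (a n)) * z) * hD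
        + (-(z * w * Dx)) * mc
    · rw [stepY, stepD]
      linear_combination ((z - w) * (a n) * (starRingEnd ℂ) (a n)) * hY
        + (-((z - w) * z * w * (a n))) * hX
        + (-((z - w) * (starRingEnd ℂ) (a n))) * hZ
        + (z * (1 - (a n) * (starRingEnd ℂ) (a n))) * hD
        + (-(z * w * Dx)) * mc

/-! ### Evaluating the Poisson bracket -/

lemma pb_Phi (n : ℕ) (z w : ℂ) (a : ℕ → ℂ) :
    pb (Phi n z) (Phi n w) a = Complex.I * XS n z w a := by
  unfold pb XS
  congr 1
  rw [tsum_eq_sum (s := Finset.range n) ?h0]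
  · exact Finset.sum_congr rfl fun k _ => by
      simp only [dAlpha_Phi, dAlphaBar_Phi]
  case h0 =>
    intro k hk
    have hnk : n ≤ k := le_of_not_gt fun h => hk (Finset.mem_range.mpr h)
    have e1 : WD n z k a = 0 := WD_zero n z k a hnk
    have e2 : WD n w k a = 0 := WD_zero n w k a hnk
    simp [dAlpha_Phi, dAlphaBar_Phi, e1, e2]

lemma dAlpha_Psi (n : ℕ) (z : ℂ) (k : ℕ) (a : ℕ → ℂ) :
    dAlpha k (Psi n z) a = -((WD n z k (fun j => -a j)).1.1) ∧
    dAlphaBar k (Psi n z) a = -((WD n z k (fun j => -a j)).1.2) := by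
  set b : ℕ → ℂ := fun j => -a j with hbdef
  obtain ⟨h1, _, h3, _⟩ := hasW z k b n
  have harg1 : ∀ t : ℝ, (fun j => -Function.update a k (a k + (t : ℂ)) j)
      = Function.update b k (b k + ((-t : ℝ) : ℂ)) := by
    intro t
    funext j
    rcases eq_or_ne j k with h | h
    · subst h
      simp only [Function.update_self, hbdef]
      push_cast
      ring
    · simp [Function.update_of_ne h, hbdef]
  have harg2 : ∀ t : ℝ, (fun j => -Function.update a k (a k + (t : ℂ) * Complex.I) j)
      = Function.update b k (b k + ((-t : ℝ) : ℂ) * Complex.I) := by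
    intro t
    funext j
    rcases eq_or_ne j k with h | h
    · subst h
      simp only [Function.update_self, hbdef]
      push_cast
      ring
    · simp [Function.update_of_ne h, hbdef]
  have e1 : (fun t : ℝ => Psi n z (Function.update a k (a k + (t : ℂ))))
      = (fun t : ℝ => (PhiP n z (Function.update b k (b k + ((-t : ℝ) : ℂ)))).1) := by
    funext t
    unfold Psi Phi
    rw [harg1 t]
  have e2 : (fun t : ℝ => Psi n z (Function.update a k (a k + (t : ℂ) * Complex.I)))
      = (fun t : ℝ =>
          (PhiP n z (Function.update b k (b k + ((-t : ℝ) : ℂ) * Complex.I))).1) := by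
    funext t
    unfold Psi Phi
    rw [harg2 t]
  have hneg : HasDerivAt (fun t : ℝ => -t) (-1 : ℝ) 0 := hasDerivAt_neg' 0
  have H1 : HasDerivAt (fun t : ℝ => (PhiP n z (Function.update b k (b k + ((-t : ℝ) : ℂ)))).1)
      (-((WD n z k b).1.1 + (WD n z k b).1.2)) 0 := by
    have h := h1.scomp_of_eq 0 hneg (by norm_num)
    rw [neg_one_smul] at h
    exact h
  have H3 : HasDerivAt
      (fun t : ℝ => (PhiP n z (Function.update b k (b k + ((-t : ℝ) : ℂ) * Complex.I))).1)
      (-(Complex.I * (WD n z k b).1.1 - Complex.I * (WD n z k b).1.2)) 0 := by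
    have h := h3.scomp_of_eq 0 hneg (by norm_num)
    rw [neg_one_smul] at h
    exact h
  constructor
  · unfold dAlpha duDeriv dvDeriv
    rw [e1, e2, H1.deriv, H3.deriv]
    linear_combination (((WD n z k b).1.1 - (WD n z k b).1.2) / 2) * Complex.I_mul_I
  · unfold dAlphaBar duDeriv dvDeriv
    rw [e1, e2, H1.deriv, H3.deriv]
    linear_combination (-((WD n z k b).1.1 - (WD n z k b).1.2) / 2) * Complex.I_mul_I

lemma pb_Psi (n : ℕ) (z w : ℂ) (a : ℕ → ℂ) :
    pb (Psi n z) (Psi n w) a = Complex.I * XS n z w (fun j => -a j) := by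
  unfold pb XS
  congr 1
  rw [tsum_eq_sum (s := Finset.range n) ?h0]
  · refine Finset.sum_congr rfl fun k _ => ?_
    rw [(dAlpha_Psi n z k a).1, (dAlpha_Psi n z k a).2,
      (dAlpha_Psi n w k a).1, (dAlpha_Psi n w k a).2]
    have : Complex.normSq ((fun j => -a j) k) = Complex.normSq (a k) := Complex.normSq_neg _
    rw [this]
    ring
  case h0 =>
    intro k hk
    have hnk : n ≤ k := le_of_not_gt fun h => hk (Finset.mem_range.mpr h)
    have e1 : WD n z k (fun j => -a j) = 0 := WD_zero n z k _ hnk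
    have e2 : WD n w k (fun j => -a j) = 0 := WD_zero n w k _ hnk
    rw [(dAlpha_Psi n z k a).1, (dAlpha_Psi n z k a).2,
      (dAlpha_Psi n w k a).1, (dAlpha_Psi n w k a).2, e1, e2]
    simp

theorem poisson_Phi_Phi (n : ℕ) (z w : ℂ) (a : ℕ → ℂ) (ha : ∀ k, ‖a k‖ < 1) :
    pb (Phi n z) (Phi n w) a = 0 ∧ pb (Psi n z) (Psi n w) a = 0 := by
  constructor
  · rw [pb_Phi, (key z w n a).1, mul_zero]
  · rw [pb_Psi, (key z w n (fun j => -a j)).1, mul_zero]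
end

section
/- For every n ≥ 0 and all z, w ∈ ℂ with z ≠ w, the Poisson bracket {Φ_n^*(z), Ψ_n(w)} = −(i·z/(z−w))·(Ψ_n^*(z)·Φ_n(w) − Ψ_n^*(w)·Φ_n(z)) − (i/2)·(Φ_n^*(z) − Ψ_n^*(z))·(Φ_n(w) − Ψ_n(w)). -/
open Complex

noncomputable def DP : ℕ → ℕ → ℂ → (ℕ → ℂ) → ℂ × ℂ
  | 0, _, _, _ => (0, 0)
  | n + 1, k, z, a =>
      if k = n then (0, -z * (PhiP n z a).1)
      else (z * (DP n k z a).1 - (starRingEnd ℂ) (a n) * (DP n k z a).2,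
            (DP n k z a).2 - a n * z * (DP n k z a).1)

noncomputable def DQ : ℕ → ℕ → ℂ → (ℕ → ℂ) → ℂ × ℂ
  | 0, _, _, _ => (0, 0)
  | n + 1, k, z, a =>
      if k = n then (-(PhiP n z a).2, 0)
      else (z * (DQ n k z a).1 - (starRingEnd ℂ) (a n) * (DQ n k z a).2,
            (DQ n k z a).2 - a n * z * (DQ n k z a).1)

lemma PhiP_congr (z : ℂ) : ∀ (n : ℕ) (a b : ℕ → ℂ), (∀ j, j < n → a j = b j) →
    PhiP n z a = PhiP n z b
  | 0, _, _, _ => rfl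
  | n + 1, a, b, h => by
      have h1 := PhiP_congr z n a b (fun j hj => h j (hj.trans (Nat.lt_succ_self n)))
      simp [PhiP, h1, h n (Nat.lt_succ_self n)]

lemma DP_eq_zero (z : ℂ) : ∀ (n k : ℕ) (a : ℕ → ℂ), n ≤ k → DP n k z a = 0
  | 0, _, _, _ => rfl
  | n + 1, k, a, h => by
      have hk : k ≠ n := by omega
      have h2 := DP_eq_zero z n k a (by omega)
      simp [DP, hk, h2]

lemma PhiP_update (z : ℂ) : ∀ (n k : ℕ) (a : ℕ → ℂ) (c : ℂ),
    (PhiP n z (Function.update a k c)).1 =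
      (PhiP n z a).1 + (c - a k) * (DP n k z a).1
        + ((starRingEnd ℂ) c - (starRingEnd ℂ) (a k)) * (DQ n k z a).1 ∧
    (PhiP n z (Function.update a k c)).2 =
      (PhiP n z a).2 + (c - a k) * (DP n k z a).2
        + ((starRingEnd ℂ) c - (starRingEnd ℂ) (a k)) * (DQ n k z a).2
  | 0, k, a, c => by simp [PhiP, DP, DQ]
  | n + 1, k, a, c => by
      by_cases hk : k = n
      · have h0 : PhiP n z (Function.update a n c) = PhiP n z a :=
          PhiP_congr z n _ _ (fun j hj => Function.update_of_ne (by omega) _ _)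
        have hupd : Function.update a k c n = c := by
          rw [hk]; exact Function.update_self _ _ _
        constructor <;>
          · simp [PhiP, DP, DQ, hk, h0, hupd]
            ring
      · obtain ⟨h1, h2⟩ := PhiP_update z n k a c
        have hn : Function.update a k c n = a n :=
          Function.update_of_ne (fun h => hk h.symm) _ _
        constructor <;>
          · simp [PhiP, DP, DQ, hk, h1, h2, hn]
            ring


lemma hasDerivAt_cAdd (c d : ℂ) : HasDerivAt (fun t : ℝ => c + (t : ℂ) * d) d 0 := by
  have h : HasDerivAt (fun x : ℂ => c + x * d) d ((0 : ℝ) : ℂ) := by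
    simpa using ((hasDerivAt_id ((0 : ℝ) : ℂ)).mul_const d).const_add c
  exact h.comp_ofReal

lemma dAlpha_dAlphaBar_of_affine (k : ℕ) (f : (ℕ → ℂ) → ℂ) (a : ℕ → ℂ) (B C : ℂ)
    (h : ∀ c : ℂ, f (Function.update a k c) =
      f a + (c - a k) * B + ((starRingEnd ℂ) c - (starRingEnd ℂ) (a k)) * C) :
    dAlpha k f a = B ∧ dAlphaBar k f a = C := by
  have hu : duDeriv k f a = B + C := by
    have he : (fun t : ℝ => f (Function.update a k (a k + (t : ℂ)))) =
        fun t : ℝ => f a + (t : ℂ) * (B + C) := by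
      funext t
      rw [h]
      simp only [map_add, Complex.conj_ofReal]
      ring
    rw [duDeriv, he]
    exact (hasDerivAt_cAdd (f a) (B + C)).deriv
  have hv : dvDeriv k f a = Complex.I * (B - C) := by
    have he : (fun t : ℝ => f (Function.update a k (a k + (t : ℂ) * Complex.I))) =
        fun t : ℝ => f a + (t : ℂ) * (Complex.I * (B - C)) := by
      funext t
      rw [h]
      simp only [map_add, map_mul, Complex.conj_ofReal, Complex.conj_I]
      ring
    rw [dvDeriv, he]
    exact (hasDerivAt_cAdd _ _).deriv
  constructor
  · rw [dAlpha, hu, hv]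
    linear_combination (C - B) / 2 * Complex.I_sq
  · rw [dAlphaBar, hu, hv]
    linear_combination (B - C) / 2 * Complex.I_sq

lemma dAlpha_PhiStar_aux (n k : ℕ) (z : ℂ) (a : ℕ → ℂ) :
    dAlpha k (PhiStar n z) a = (DP n k z a).2 ∧
      dAlphaBar k (PhiStar n z) a = (DQ n k z a).2 :=
  dAlpha_dAlphaBar_of_affine k _ a _ _ (fun c => (PhiP_update z n k a c).2)

lemma neg_update (a : ℕ → ℂ) (k : ℕ) (c : ℂ) :
    (fun j => -(Function.update a k c j)) = Function.update (fun j => -a j) k (-c) := by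
  funext j
  rcases eq_or_ne j k with rfl | hj
  · simp
  · simp [Function.update_of_ne hj]

lemma dAlpha_Psi_aux (n k : ℕ) (w : ℂ) (a : ℕ → ℂ) :
    dAlpha k (Psi n w) a = -(DP n k w (fun j => -a j)).1 ∧
      dAlphaBar k (Psi n w) a = -(DQ n k w (fun j => -a j)).1 := by
  apply dAlpha_dAlphaBar_of_affine
  intro c
  have h1 : (fun j => -(Function.update a k c j)) = Function.update (fun j => -a j) k (-c) :=
    neg_update a k c
  show (PhiP n w (fun j => -(Function.update a k c j))).1 = _
  rw [h1, (PhiP_update w n k (fun j => -a j) (-c)).1]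
  simp only [Psi, Phi, map_neg]
  ring

noncomputable def t02 (n : ℕ) (z w : ℂ) (a : ℕ → ℂ) (k : ℕ) : ℂ :=
  (1 - (Complex.normSq (a k) : ℂ)) *
    ((DQ n k z a).1 * (-(DP n k w (fun j => -a j)).1) -
     (DP n k z a).1 * (-(DQ n k w (fun j => -a j)).1))

noncomputable def t03 (n : ℕ) (z w : ℂ) (a : ℕ → ℂ) (k : ℕ) : ℂ :=
  (1 - (Complex.normSq (a k) : ℂ)) *
    ((DQ n k z a).1 * (-(DP n k w (fun j => -a j)).2) -
     (DP n k z a).1 * (-(DQ n k w (fun j => -a j)).2))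

noncomputable def t12 (n : ℕ) (z w : ℂ) (a : ℕ → ℂ) (k : ℕ) : ℂ :=
  (1 - (Complex.normSq (a k) : ℂ)) *
    ((DQ n k z a).2 * (-(DP n k w (fun j => -a j)).1) -
     (DP n k z a).2 * (-(DQ n k w (fun j => -a j)).1))

noncomputable def t13 (n : ℕ) (z w : ℂ) (a : ℕ → ℂ) (k : ℕ) : ℂ :=
  (1 - (Complex.normSq (a k) : ℂ)) *
    ((DQ n k z a).2 * (-(DP n k w (fun j => -a j)).2) -
     (DP n k z a).2 * (-(DQ n k w (fun j => -a j)).2))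

lemma key_s5 (z w : ℂ) (a : ℕ → ℂ) : ∀ n : ℕ,
    ((z - w) * ∑ k ∈ Finset.range n, t02 n z w a k =
      (1/2) * ((z - w) * ((PhiP n z (fun j => -a j)).1 * (PhiP n w (fun j => -a j)).1 -
          (PhiP n z a).1 * (PhiP n w a).1) +
        (z + w) * ((PhiP n z (fun j => -a j)).1 * (PhiP n w a).1 -
          (PhiP n z a).1 * (PhiP n w (fun j => -a j)).1))) ∧
    ((z - w) * ∑ k ∈ Finset.range n, t03 n z w a k =
      (1/2) * (z - w) * ((PhiP n z a).1 * (PhiP n w a).2 -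
          (PhiP n z a).1 * (PhiP n w (fun j => -a j)).2 +
          (PhiP n z (fun j => -a j)).1 * (PhiP n w (fun j => -a j)).2) +
        w * (PhiP n z a).2 * (PhiP n w (fun j => -a j)).1 -
        ((z + w)/2) * (PhiP n z (fun j => -a j)).1 * (PhiP n w a).2) ∧
    ((z - w) * ∑ k ∈ Finset.range n, t12 n z w a k =
      -z * ((PhiP n z (fun j => -a j)).2 * (PhiP n w a).1 -
          (PhiP n w (fun j => -a j)).2 * (PhiP n z a).1) -
        (1/2) * (z - w) * ((PhiP n z a).2 - (PhiP n z (fun j => -a j)).2) *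
          ((PhiP n w a).1 - (PhiP n w (fun j => -a j)).1)) ∧
    ((z - w) * ∑ k ∈ Finset.range n, t13 n z w a k =
      (1/2) * ((z - w) * (PhiP n z a).2 * (PhiP n w a).2 -
        (z + w) * (PhiP n z a).2 * (PhiP n w (fun j => -a j)).2 +
        (z + w) * (PhiP n z (fun j => -a j)).2 * (PhiP n w a).2 -
        (z - w) * (PhiP n z (fun j => -a j)).2 * (PhiP n w (fun j => -a j)).2)) := by
  intro n
  induction n with
  | zero =>
      refine ⟨?_, ?_, ?_, ?_⟩ <;>
        · simp only [Finset.range_zero, Finset.sum_empty, PhiP, mul_zero]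
          ring
  | succ n ih =>
      obtain ⟨ih02, ih03, ih12, ih13⟩ := ih
      have hDPz : DP (n+1) n z a = (0, -z * (PhiP n z a).1) := by simp [DP]
      have hDPw : DP (n+1) n w (fun j => -a j) = (0, -w * (PhiP n w (fun j => -a j)).1) := by
        simp [DP]
      have hDQz : DQ (n+1) n z a = (-(PhiP n z a).2, 0) := by simp [DQ]
      have hDQw : DQ (n+1) n w (fun j => -a j) = (-(PhiP n w (fun j => -a j)).2, 0) := by
        simp [DQ]
      have hns : ((Complex.normSq (a n) : ℂ)) = a n * (starRingEnd ℂ) (a n) :=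
        (Complex.mul_conj _).symm
      have h02 : ∀ k ∈ Finset.range n, t02 (n+1) z w a k =
          z * w * t02 n z w a k + z * (starRingEnd ℂ) (a n) * t03 n z w a k -
            (starRingEnd ℂ) (a n) * w * t12 n z w a k -
            (starRingEnd ℂ) (a n) * (starRingEnd ℂ) (a n) * t13 n z w a k := by
        intro k hk
        have hkn : k ≠ n := by simp at hk; omega
        simp only [t02, t03, t12, t13, DP, DQ, if_neg hkn, map_neg]
        ring
      have h03 : ∀ k ∈ Finset.range n, t03 (n+1) z w a k =
          z * t03 n z w a k + z * a n * w * t02 n z w a k -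
            (starRingEnd ℂ) (a n) * t13 n z w a k -
            (starRingEnd ℂ) (a n) * a n * w * t12 n z w a k := by
        intro k hk
        have hkn : k ≠ n := by simp at hk; omega
        simp only [t02, t03, t12, t13, DP, DQ, if_neg hkn, map_neg]
        ring
      have h12 : ∀ k ∈ Finset.range n, t12 (n+1) z w a k =
          w * t12 n z w a k + (starRingEnd ℂ) (a n) * t13 n z w a k -
            a n * z * w * t02 n z w a k -
            a n * z * (starRingEnd ℂ) (a n) * t03 n z w a k := by
        intro k hk
        have hkn : k ≠ n := by simp at hk; omega
        simp only [t02, t03, t12, t13, DP, DQ, if_neg hkn, map_neg]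
        ring
      have h13 : ∀ k ∈ Finset.range n, t13 (n+1) z w a k =
          t13 n z w a k + a n * w * t12 n z w a k - a n * z * t03 n z w a k -
            a n * a n * z * w * t02 n z w a k := by
        intro k hk
        have hkn : k ≠ n := by simp at hk; omega
        simp only [t02, t03, t12, t13, DP, DQ, if_neg hkn, map_neg]
        ring
      have e02 : t02 (n+1) z w a n = 0 := by
        simp only [t02, hDPz, hDPw, hDQz, hDQw, hns]
        ring
      have e03 : t03 (n+1) z w a n =
          (1 - a n * (starRingEnd ℂ) (a n)) *
            (-((PhiP n z a).2 * (w * (PhiP n w (fun j => -a j)).1))) := by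
        simp only [t03, hDPz, hDPw, hDQz, hDQw, hns]
        ring
      have e12 : t12 (n+1) z w a n =
          (1 - a n * (starRingEnd ℂ) (a n)) *
            (z * (PhiP n z a).1 * (PhiP n w (fun j => -a j)).2) := by
        simp only [t12, hDPz, hDPw, hDQz, hDQw, hns]
        ring
      have e13 : t13 (n+1) z w a n = 0 := by
        simp only [t13, hDPz, hDPw, hDQz, hDQw, hns]
        ring
      refine ⟨?_, ?_, ?_, ?_⟩
      · rw [Finset.sum_range_succ, Finset.sum_congr rfl h02, e02]
        simp only [Finset.sum_sub_distrib, Finset.sum_add_distrib, ← Finset.mul_sum]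
        simp only [PhiP, map_neg]
        linear_combination (z * w * (1:ℂ)) * ih02 + (z * (starRingEnd ℂ) (a n)) * ih03 -
          ((starRingEnd ℂ) (a n) * w) * ih12 -
          ((starRingEnd ℂ) (a n) * (starRingEnd ℂ) (a n)) * ih13
      · rw [Finset.sum_range_succ, Finset.sum_congr rfl h03, e03]
        simp only [Finset.sum_sub_distrib, Finset.sum_add_distrib, ← Finset.mul_sum]
        simp only [PhiP, map_neg]
        linear_combination (z * (1:ℂ)) * ih03 + (z * a n * w) * ih02 -
          ((starRingEnd ℂ) (a n)) * ih13 - ((starRingEnd ℂ) (a n) * a n * w) * ih12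
      · rw [Finset.sum_range_succ, Finset.sum_congr rfl h12, e12]
        simp only [Finset.sum_sub_distrib, Finset.sum_add_distrib, ← Finset.mul_sum]
        simp only [PhiP, map_neg]
        linear_combination (w * (1:ℂ)) * ih12 + ((starRingEnd ℂ) (a n)) * ih13 -
          (a n * z * w) * ih02 - (a n * z * (starRingEnd ℂ) (a n)) * ih03
      · rw [Finset.sum_range_succ, Finset.sum_congr rfl h13, e13]
        simp only [Finset.sum_sub_distrib, Finset.sum_add_distrib, ← Finset.mul_sum]
        simp only [PhiP, map_neg]
        linear_combination (1:ℂ) * ih13 + (a n * w) * ih12 - (a n * z) * ih03 -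
          (a n * a n * z * w) * ih02

theorem poisson_PhiStar_Psi (n : ℕ) (z w : ℂ) (hzw : z ≠ w) (a : ℕ → ℂ) (ha : ∀ k, ‖a k‖ < 1) :
    pb (PhiStar n z) (Psi n w) a =
      -(Complex.I * z / (z - w)) * (PsiStar n z a * Phi n w a - PsiStar n w a * Phi n z a)
      - Complex.I / 2 * (PhiStar n z a - PsiStar n z a) * (Phi n w a - Psi n w a) := by
  have hzw' : z - w ≠ 0 := sub_ne_zero.mpr hzw
  have hterm : ∀ k, (1 - (Complex.normSq (a k) : ℂ)) *
      (dAlphaBar k (PhiStar n z) a * dAlpha k (Psi n w) a -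
        dAlpha k (PhiStar n z) a * dAlphaBar k (Psi n w) a) = t12 n z w a k := by
    intro k
    rw [(dAlpha_PhiStar_aux n k z a).1, (dAlpha_PhiStar_aux n k z a).2,
      (dAlpha_Psi_aux n k w a).1, (dAlpha_Psi_aux n k w a).2, t12]
  have hzero : ∀ k ∉ Finset.range n, t12 n z w a k = 0 := by
    intro k hk
    have hnk : n ≤ k := by simpa using hk
    rw [t12, DP_eq_zero z n k a hnk, DP_eq_zero w n k _ hnk]
    simp
  have hkey := (key_s5 z w a n).2.2.1
  rw [pb, tsum_congr hterm, tsum_eq_sum hzero]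
  simp only [Phi, PhiStar, Psi, PsiStar]
  refine mul_left_cancel₀ hzw' ?_
  rw [mul_left_comm, hkey]
  field_simp
end

section
/- For every n ≥ 0 and all z, w ∈ ℂ with z ≠ w, the Poisson brackets {φ_n(z), φ_n(w)} and −{ψ_n(z), ψ_n(w)} are both equal to (i/4)·(φ_n(z)·ψ_n(w) − φ_n(w)·ψ_n(z)). -/
open Complex

/-- R_n = Π_{j=0}^{n−1} ρ_j⁻¹ with ρ_j = √(1 − |α_j|²), regarded as a ℂ-valued function. -/
noncomputable def Rn (n : ℕ) (a : ℕ → ℂ) : ℂ :=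
  ∏ j ∈ Finset.range n, ((Real.sqrt (1 - Complex.normSq (a j)) : ℂ))⁻¹

/-- The orthonormal polynomial φ_n(z) = R_n·Φ_n(z). -/
noncomputable def phiN (n : ℕ) (z : ℂ) (a : ℕ → ℂ) : ℂ := Rn n a * Phi n z a

/-- The reversed orthonormal polynomial φ_n^*(z) = R_n·Φ_n^*(z). -/
noncomputable def phiNStar (n : ℕ) (z : ℂ) (a : ℕ → ℂ) : ℂ := Rn n a * PhiStar n z a

/-- The normalized second kind polynomial ψ_n(z) = R_n·Ψ_n(z). -/
noncomputable def psiN (n : ℕ) (z : ℂ) (a : ℕ → ℂ) : ℂ := Rn n a * Psi n z a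

/-- The reversed normalized second kind polynomial ψ_n^*(z) = R_n·Ψ_n^*(z). -/
noncomputable def psiNStar (n : ℕ) (z : ℂ) (a : ℕ → ℂ) : ℂ := Rn n a * PsiStar n z a

namespace CS

/-- ρ⁻¹ as a function of a single Verblunsky coefficient. -/
noncomputable def rIC (c : ℂ) : ℂ := ((Real.sqrt (1 - Complex.normSq c) : ℝ) : ℂ)⁻¹

lemma PhiP_congr (n : ℕ) (z : ℂ) {a b : ℕ → ℂ} (h : ∀ j < n, a j = b j) :
    PhiP n z a = PhiP n z b := by
  induction n with
  | zero => rfl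
  | succ n ih =>
    have h1 : ∀ j < n, a j = b j := fun j hj => h j (Nat.lt_succ_of_lt hj)
    simp only [PhiP, ih h1, h n (Nat.lt_succ_self n)]

lemma Rn_congr (n : ℕ) {a b : ℕ → ℂ} (h : ∀ j < n, a j = b j) : Rn n a = Rn n b := by
  unfold Rn
  exact Finset.prod_congr rfl fun j hj => by rw [h j (Finset.mem_range.mp hj)]

lemma phiN_update_ge (n k : ℕ) (z : ℂ) (a : ℕ → ℂ) (x : ℂ) (hk : n ≤ k) :
    phiN n z (Function.update a k x) = phiN n z a := by
  have h : ∀ j < n, Function.update a k x j = a j := fun j hj =>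
    Function.update_of_ne (by omega) _ _
  unfold phiN Phi
  rw [Rn_congr n h, PhiP_congr n z h]

lemma phiNStar_update_ge (n k : ℕ) (z : ℂ) (a : ℕ → ℂ) (x : ℂ) (hk : n ≤ k) :
    phiNStar n z (Function.update a k x) = phiNStar n z a := by
  have h : ∀ j < n, Function.update a k x j = a j := fun j hj =>
    Function.update_of_ne (by omega) _ _
  unfold phiNStar PhiStar
  rw [Rn_congr n h, PhiP_congr n z h]

lemma phiN_succ (n : ℕ) (z : ℂ) (a : ℕ → ℂ) :
    phiN (n + 1) z a = rIC (a n) * (z * phiN n z a - (starRingEnd ℂ) (a n) * phiNStar n z a) := by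
  unfold phiN phiNStar Phi PhiStar Rn rIC
  rw [Finset.prod_range_succ]
  show _ * (PhiP (n+1) z a).1 = _
  simp only [PhiP]
  ring

lemma phiNStar_succ (n : ℕ) (z : ℂ) (a : ℕ → ℂ) :
    phiNStar (n + 1) z a = rIC (a n) * (phiNStar n z a - a n * z * phiN n z a) := by
  unfold phiN phiNStar Phi PhiStar Rn rIC
  rw [Finset.prod_range_succ]
  show _ * (PhiP (n+1) z a).2 = _
  simp only [PhiP]
  ring

lemma psiN_eq (n : ℕ) (z : ℂ) (a : ℕ → ℂ) : psiN n z a = phiN n z (fun k => -a k) := by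
  unfold psiN phiN Psi Phi
  congr 1
  unfold Rn
  exact Finset.prod_congr rfl fun j _ => by rw [Complex.normSq_neg]

lemma psiNStar_eq (n : ℕ) (z : ℂ) (a : ℕ → ℂ) :
    psiNStar n z a = phiNStar n z (fun k => -a k) := by
  unfold psiNStar phiNStar PsiStar PhiStar
  congr 1
  unfold Rn
  exact Finset.prod_congr rfl fun j _ => by rw [Complex.normSq_neg]

lemma psiN_succ (n : ℕ) (z : ℂ) (a : ℕ → ℂ) :
    psiN (n + 1) z a = rIC (a n) * (z * psiN n z a + (starRingEnd ℂ) (a n) * psiNStar n z a) := by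
  rw [psiN_eq, phiN_succ, ← psiN_eq, ← psiNStar_eq]
  simp only [map_neg]
  have : rIC (-a n) = rIC (a n) := by unfold rIC; rw [Complex.normSq_neg]
  rw [this]; ring

lemma psiNStar_succ (n : ℕ) (z : ℂ) (a : ℕ → ℂ) :
    psiNStar (n + 1) z a = rIC (a n) * (psiNStar n z a + a n * z * psiN n z a) := by
  rw [psiNStar_eq, phiNStar_succ, ← psiN_eq, ← psiNStar_eq]
  have : rIC (-a n) = rIC (a n) := by unfold rIC; rw [Complex.normSq_neg]
  rw [this]; ring

lemma phiN_zero (z : ℂ) (a : ℕ → ℂ) : phiN 0 z a = 1 := by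
  unfold phiN Phi Rn; simp [PhiP]

lemma phiNStar_zero (z : ℂ) (a : ℕ → ℂ) : phiNStar 0 z a = 1 := by
  unfold phiNStar PhiStar Rn; simp [PhiP]

lemma psiN_zero (z : ℂ) (a : ℕ → ℂ) : psiN 0 z a = 1 := by rw [psiN_eq, phiN_zero]
lemma psiNStar_zero (z : ℂ) (a : ℕ → ℂ) : psiNStar 0 z a = 1 := by
  rw [psiNStar_eq, phiNStar_zero]

end CS
namespace CS

lemma duDeriv_phiN_ge (n k : ℕ) (z : ℂ) (a : ℕ → ℂ) (hk : n ≤ k) :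
    duDeriv k (phiN n z) a = 0 := by
  unfold duDeriv
  have : (fun t : ℝ => phiN n z (Function.update a k (a k + (t:ℂ)))) = fun _ => phiN n z a :=
    funext fun t => phiN_update_ge n k z a _ hk
  rw [this, deriv_const]

lemma dvDeriv_phiN_ge (n k : ℕ) (z : ℂ) (a : ℕ → ℂ) (hk : n ≤ k) :
    dvDeriv k (phiN n z) a = 0 := by
  unfold dvDeriv
  have : (fun t : ℝ => phiN n z (Function.update a k (a k + (t:ℂ) * Complex.I)))
      = fun _ => phiN n z a := funext fun t => phiN_update_ge n k z a _ hk
  rw [this, deriv_const]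

lemma dAlpha_phiN_ge (n k : ℕ) (z : ℂ) (a : ℕ → ℂ) (hk : n ≤ k) :
    dAlpha k (phiN n z) a = 0 := by
  unfold dAlpha; rw [duDeriv_phiN_ge n k z a hk, dvDeriv_phiN_ge n k z a hk]; ring

lemma dAlphaBar_phiN_ge (n k : ℕ) (z : ℂ) (a : ℕ → ℂ) (hk : n ≤ k) :
    dAlphaBar k (phiN n z) a = 0 := by
  unfold dAlphaBar; rw [duDeriv_phiN_ge n k z a hk, dvDeriv_phiN_ge n k z a hk]; ring

lemma hasDerivAt_rIC_u (c : ℂ) (hc : Complex.normSq c < 1) :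
    HasDerivAt (fun t : ℝ => rIC (c + (t:ℂ))) (((c.re:ℂ)) * rIC c ^ 3) 0 := by
  have h0 : (0:ℝ) < 1 - Complex.normSq c := by linarith
  set g : ℝ → ℝ := fun t => 1 - ((c.re + t)^2 + c.im^2) with hgdef
  have hg0 : g 0 = 1 - Complex.normSq c := by
    simp only [hgdef, Complex.normSq_apply]; ring
  have hg : HasDerivAt g (-(2*c.re)) 0 := by
    have h1 : HasDerivAt (fun t:ℝ => c.re + t) 1 0 := (hasDerivAt_id 0).const_add c.re
    have h2 := (h1.pow 2).add_const (c.im^2)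
    have h3 := h2.const_sub 1
    refine h3.congr_deriv ?_
    norm_num
  have hs : (0:ℝ) < Real.sqrt (1 - Complex.normSq c) := Real.sqrt_pos.mpr h0
  have hsq : HasDerivAt (fun t => Real.sqrt (g t))
      (1 / (2 * Real.sqrt (g 0)) * (-(2*c.re))) 0 :=
    (Real.hasDerivAt_sqrt (by rw [hg0]; exact ne_of_gt h0)).comp 0 hg
  have hne : Real.sqrt (g 0) ≠ 0 := by rw [hg0]; exact ne_of_gt hs
  have hinv := (hsq.inv hne).ofReal_comp
  have hfun : (fun t : ℝ => rIC (c + (t:ℂ)))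
      = fun t : ℝ => (((Real.sqrt (g t))⁻¹ : ℝ) : ℂ) := by
    funext t
    unfold rIC
    rw [Complex.ofReal_inv]
    congr 2
    simp only [hgdef, Complex.normSq_apply, Complex.add_re, Complex.add_im,
      Complex.ofReal_re, Complex.ofReal_im, add_zero]
    ring
  have hval : -(1 / (2 * Real.sqrt (g 0)) * -(2*c.re)) / Real.sqrt (g 0) ^ 2
      = c.re * ((Real.sqrt (1 - Complex.normSq c))⁻¹)^3 := by
    have hsq2 : Real.sqrt (1 - Complex.normSq c) ^ 2 = 1 - Complex.normSq c :=
      Real.sq_sqrt h0.le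
    rw [hg0]; field_simp
  rw [hval] at hinv
  rw [hfun]
  convert hinv using 1
  · rfl
  unfold rIC
  push_cast
  ring

lemma hasDerivAt_rIC_v (c : ℂ) (hc : Complex.normSq c < 1) :
    HasDerivAt (fun t : ℝ => rIC (c + (t:ℂ) * Complex.I)) (((c.im:ℂ)) * rIC c ^ 3) 0 := by
  have h0 : (0:ℝ) < 1 - Complex.normSq c := by linarith
  set g : ℝ → ℝ := fun t => 1 - (c.re^2 + (c.im + t)^2) with hgdef
  have hg0 : g 0 = 1 - Complex.normSq c := by
    simp only [hgdef, Complex.normSq_apply]; ring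
  have hg : HasDerivAt g (-(2*c.im)) 0 := by
    have h1 : HasDerivAt (fun t:ℝ => c.im + t) 1 0 := (hasDerivAt_id 0).const_add c.im
    have h2 := ((h1.pow 2).const_add (c.re^2)).const_sub 1
    refine h2.congr_deriv ?_
    norm_num
  have hs : (0:ℝ) < Real.sqrt (1 - Complex.normSq c) := Real.sqrt_pos.mpr h0
  have hsq : HasDerivAt (fun t => Real.sqrt (g t))
      (1 / (2 * Real.sqrt (g 0)) * (-(2*c.im))) 0 :=
    (Real.hasDerivAt_sqrt (by rw [hg0]; exact ne_of_gt h0)).comp 0 hg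
  have hne : Real.sqrt (g 0) ≠ 0 := by rw [hg0]; exact ne_of_gt hs
  have hinv := (hsq.inv hne).ofReal_comp
  have hfun : (fun t : ℝ => rIC (c + (t:ℂ) * Complex.I))
      = fun t : ℝ => (((Real.sqrt (g t))⁻¹ : ℝ) : ℂ) := by
    funext t
    unfold rIC
    rw [Complex.ofReal_inv]
    congr 2
    simp only [hgdef, Complex.normSq_apply, Complex.add_re, Complex.add_im,
      Complex.mul_re, Complex.mul_im, Complex.I_re, Complex.I_im,
      Complex.ofReal_re, Complex.ofReal_im]
    ring
  have hval : -(1 / (2 * Real.sqrt (g 0)) * -(2*c.im)) / Real.sqrt (g 0) ^ 2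
      = c.im * ((Real.sqrt (1 - Complex.normSq c))⁻¹)^3 := by
    have hsq2 : Real.sqrt (1 - Complex.normSq c) ^ 2 = 1 - Complex.normSq c :=
      Real.sq_sqrt h0.le
    rw [hg0]; field_simp
  rw [hval] at hinv
  rw [hfun]
  convert hinv using 1
  · rfl
  unfold rIC
  push_cast
  ring

lemma hasDerivAt_ofReal : HasDerivAt (fun t : ℝ => (t:ℂ)) 1 0 := by
  simpa using (hasDerivAt_id (0:ℝ)).ofReal_comp

lemma hasDerivAt_conj_u (c : ℂ) :
    HasDerivAt (fun t : ℝ => (starRingEnd ℂ) (c + (t:ℂ))) 1 0 := by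
  have : (fun t : ℝ => (starRingEnd ℂ) (c + (t:ℂ)))
      = fun t : ℝ => (starRingEnd ℂ) c + (t:ℂ) := by
    funext t; rw [map_add, Complex.conj_ofReal]
  rw [this]
  exact hasDerivAt_ofReal.const_add _

lemma hasDerivAt_conj_v (c : ℂ) :
    HasDerivAt (fun t : ℝ => (starRingEnd ℂ) (c + (t:ℂ) * Complex.I)) (-Complex.I) 0 := by
  have : (fun t : ℝ => (starRingEnd ℂ) (c + (t:ℂ) * Complex.I))
      = fun t : ℝ => (starRingEnd ℂ) c + (t:ℂ) * (-Complex.I) := by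
    funext t
    rw [map_add, map_mul, Complex.conj_ofReal, Complex.conj_I]
  rw [this]
  simpa using (hasDerivAt_ofReal.mul_const (-Complex.I)).const_add ((starRingEnd ℂ) c)

lemma hasDerivAt_self_u (c : ℂ) : HasDerivAt (fun t : ℝ => c + (t:ℂ)) 1 0 :=
  hasDerivAt_ofReal.const_add c

lemma hasDerivAt_self_v (c : ℂ) :
    HasDerivAt (fun t : ℝ => c + (t:ℂ) * Complex.I) Complex.I 0 := by
  simpa using (hasDerivAt_ofReal.mul_const Complex.I).const_add c

end CS
namespace CS

lemma diffPaths (z : ℂ) : ∀ (n : ℕ) (a : ℕ → ℂ), (∀ j, Complex.normSq (a j) < 1) → ∀ k,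
    (DifferentiableAt ℝ (fun t : ℝ => phiN n z (Function.update a k (a k + (t:ℂ)))) 0 ∧
     DifferentiableAt ℝ (fun t : ℝ => phiN n z (Function.update a k (a k + (t:ℂ) * Complex.I))) 0) ∧
    (DifferentiableAt ℝ (fun t : ℝ => phiNStar n z (Function.update a k (a k + (t:ℂ)))) 0 ∧
     DifferentiableAt ℝ (fun t : ℝ => phiNStar n z (Function.update a k (a k + (t:ℂ) * Complex.I))) 0) := by
  intro n
  induction n with
  | zero =>
    intro a ha k
    simp only [phiN_zero, phiNStar_zero]
    exact ⟨⟨differentiableAt_const _, differentiableAt_const _⟩,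
           ⟨differentiableAt_const _, differentiableAt_const _⟩⟩
  | succ n ih =>
    intro a ha k
    by_cases hk : k = n
    · subst hk
      have e1 : ∀ x : ℂ, phiN (k+1) z (Function.update a k x)
          = rIC x * (z * phiN k z a - (starRingEnd ℂ) x * phiNStar k z a) := by
        intro x
        rw [phiN_succ, Function.update_self, phiN_update_ge k k z a _ le_rfl,
          phiNStar_update_ge k k z a _ le_rfl]
      have e2 : ∀ x : ℂ, phiNStar (k+1) z (Function.update a k x)
          = rIC x * (phiNStar k z a - x * z * phiN k z a) := by
        intro x
        rw [phiNStar_succ, Function.update_self, phiN_update_ge k k z a _ le_rfl,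
          phiNStar_update_ge k k z a _ le_rfl]
      refine ⟨⟨?_, ?_⟩, ?_, ?_⟩
      · simp only [e1]
        exact ((hasDerivAt_rIC_u (a k) (ha k)).differentiableAt).mul
          ((differentiableAt_const _).sub
            (((hasDerivAt_conj_u (a k)).differentiableAt).mul_const _))
      · simp only [e1]
        exact ((hasDerivAt_rIC_v (a k) (ha k)).differentiableAt).mul
          ((differentiableAt_const _).sub
            (((hasDerivAt_conj_v (a k)).differentiableAt).mul_const _))
      · simp only [e2]
        exact ((hasDerivAt_rIC_u (a k) (ha k)).differentiableAt).mul
          ((differentiableAt_const _).sub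
            ((((hasDerivAt_self_u (a k)).differentiableAt).mul_const _).mul_const _))
      · simp only [e2]
        exact ((hasDerivAt_rIC_v (a k) (ha k)).differentiableAt).mul
          ((differentiableAt_const _).sub
            ((((hasDerivAt_self_v (a k)).differentiableAt).mul_const _).mul_const _))
    · have hnk : n ≠ k := fun h => hk h.symm
      have e1 : ∀ x : ℂ, phiN (n+1) z (Function.update a k x)
          = rIC (a n) * (z * phiN n z (Function.update a k x)
            - (starRingEnd ℂ) (a n) * phiNStar n z (Function.update a k x)) := by
        intro x; rw [phiN_succ, Function.update_of_ne hnk]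
      have e2 : ∀ x : ℂ, phiNStar (n+1) z (Function.update a k x)
          = rIC (a n) * (phiNStar n z (Function.update a k x)
            - a n * z * phiN n z (Function.update a k x)) := by
        intro x; rw [phiNStar_succ, Function.update_of_ne hnk]
      obtain ⟨⟨hu1, hv1⟩, hu2, hv2⟩ := ih a ha k
      refine ⟨⟨?_, ?_⟩, ?_, ?_⟩
      · simp only [e1]
        exact ((hu1.const_mul z).sub (hu2.const_mul ((starRingEnd ℂ) (a n)))).const_mul (rIC (a n))
      · simp only [e1]
        exact ((hv1.const_mul z).sub (hv2.const_mul ((starRingEnd ℂ) (a n)))).const_mul (rIC (a n))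
      · simp only [e2]
        exact (hu2.sub (hu1.const_mul (a n * z))).const_mul (rIC (a n))
      · simp only [e2]
        exact (hv2.sub (hv1.const_mul (a n * z))).const_mul (rIC (a n))

end CS
namespace CS

lemma deriv_rec (n k : ℕ) (hk : k ≠ n) (z : ℂ) (a : ℕ → ℂ)
    (ha : ∀ j, Complex.normSq (a j) < 1) :
    (duDeriv k (phiN (n+1) z) a
        = rIC (a n) * (z * duDeriv k (phiN n z) a
            - (starRingEnd ℂ) (a n) * duDeriv k (phiNStar n z) a)) ∧
    (dvDeriv k (phiN (n+1) z) a
        = rIC (a n) * (z * dvDeriv k (phiN n z) a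
            - (starRingEnd ℂ) (a n) * dvDeriv k (phiNStar n z) a)) ∧
    (duDeriv k (phiNStar (n+1) z) a
        = rIC (a n) * (duDeriv k (phiNStar n z) a - a n * z * duDeriv k (phiN n z) a)) ∧
    (dvDeriv k (phiNStar (n+1) z) a
        = rIC (a n) * (dvDeriv k (phiNStar n z) a - a n * z * dvDeriv k (phiN n z) a)) := by
  have hnk : n ≠ k := fun h => hk h.symm
  obtain ⟨⟨hu1, hv1⟩, hu2, hv2⟩ := diffPaths z n a ha k
  have e1 : ∀ x : ℂ, phiN (n+1) z (Function.update a k x)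
      = rIC (a n) * (z * phiN n z (Function.update a k x)
        - (starRingEnd ℂ) (a n) * phiNStar n z (Function.update a k x)) := by
    intro x; rw [phiN_succ, Function.update_of_ne hnk]
  have e2 : ∀ x : ℂ, phiNStar (n+1) z (Function.update a k x)
      = rIC (a n) * (phiNStar n z (Function.update a k x)
        - a n * z * phiN n z (Function.update a k x)) := by
    intro x; rw [phiNStar_succ, Function.update_of_ne hnk]
  refine ⟨?_, ?_, ?_, ?_⟩
  · show deriv _ 0 = _
    simp only [e1]
    exact (((hu1.hasDerivAt.const_mul z).sub
      (hu2.hasDerivAt.const_mul ((starRingEnd ℂ) (a n)))).const_mul (rIC (a n))).deriv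
  · show deriv _ 0 = _
    simp only [e1]
    exact (((hv1.hasDerivAt.const_mul z).sub
      (hv2.hasDerivAt.const_mul ((starRingEnd ℂ) (a n)))).const_mul (rIC (a n))).deriv
  · show deriv _ 0 = _
    simp only [e2]
    exact ((hu2.hasDerivAt.sub
      (hu1.hasDerivAt.const_mul (a n * z))).const_mul (rIC (a n))).deriv
  · show deriv _ 0 = _
    simp only [e2]
    exact ((hv2.hasDerivAt.sub
      (hv1.hasDerivAt.const_mul (a n * z))).const_mul (rIC (a n))).deriv

lemma dAlpha_rec (n k : ℕ) (hk : k ≠ n) (z : ℂ) (a : ℕ → ℂ)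
    (ha : ∀ j, Complex.normSq (a j) < 1) :
    (dAlpha k (phiN (n+1) z) a
        = rIC (a n) * (z * dAlpha k (phiN n z) a
            - (starRingEnd ℂ) (a n) * dAlpha k (phiNStar n z) a)) ∧
    (dAlphaBar k (phiN (n+1) z) a
        = rIC (a n) * (z * dAlphaBar k (phiN n z) a
            - (starRingEnd ℂ) (a n) * dAlphaBar k (phiNStar n z) a)) ∧
    (dAlpha k (phiNStar (n+1) z) a
        = rIC (a n) * (dAlpha k (phiNStar n z) a - a n * z * dAlpha k (phiN n z) a)) ∧
    (dAlphaBar k (phiNStar (n+1) z) a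
        = rIC (a n) * (dAlphaBar k (phiNStar n z) a - a n * z * dAlphaBar k (phiN n z) a)) := by
  obtain ⟨h1, h2, h3, h4⟩ := deriv_rec n k hk z a ha
  refine ⟨?_, ?_, ?_, ?_⟩
  · simp only [dAlpha]; rw [h1, h2]; ring
  · simp only [dAlphaBar]; rw [h1, h2]; ring
  · simp only [dAlpha]; rw [h3, h4]; ring
  · simp only [dAlphaBar]; rw [h3, h4]; ring

end CS
namespace CS

lemma deriv_self (n : ℕ) (z : ℂ) (a : ℕ → ℂ) (ha : Complex.normSq (a n) < 1) :
    (duDeriv n (phiN (n+1) z) a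
      = ((a n).re : ℂ) * rIC (a n) ^ 3
          * (z * phiN n z a - (starRingEnd ℂ) (a n) * phiNStar n z a)
        - rIC (a n) * phiNStar n z a) ∧
    (dvDeriv n (phiN (n+1) z) a
      = ((a n).im : ℂ) * rIC (a n) ^ 3
          * (z * phiN n z a - (starRingEnd ℂ) (a n) * phiNStar n z a)
        + Complex.I * rIC (a n) * phiNStar n z a) ∧
    (duDeriv n (phiNStar (n+1) z) a
      = ((a n).re : ℂ) * rIC (a n) ^ 3
          * (phiNStar n z a - a n * z * phiN n z a)
        - rIC (a n) * z * phiN n z a) ∧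
    (dvDeriv n (phiNStar (n+1) z) a
      = ((a n).im : ℂ) * rIC (a n) ^ 3
          * (phiNStar n z a - a n * z * phiN n z a)
        - Complex.I * rIC (a n) * z * phiN n z a) := by
  set C := phiN n z a with hC
  set D := phiNStar n z a with hD
  have e1 : ∀ x : ℂ, phiN (n+1) z (Function.update a n x)
      = rIC x * (z * C - (starRingEnd ℂ) x * D) := by
    intro x
    rw [phiN_succ, Function.update_self, phiN_update_ge n n z a _ le_rfl,
      phiNStar_update_ge n n z a _ le_rfl]
  have e2 : ∀ x : ℂ, phiNStar (n+1) z (Function.update a n x)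
      = rIC x * (D - x * z * C) := by
    intro x
    rw [phiNStar_succ, Function.update_self, phiN_update_ge n n z a _ le_rfl,
      phiNStar_update_ge n n z a _ le_rfl]
  refine ⟨?_, ?_, ?_, ?_⟩
  · show deriv _ 0 = _
    simp only [e1]
    have H := (hasDerivAt_rIC_u (a n) ha).mul
      ((hasDerivAt_const (0:ℝ) (z * C)).sub ((hasDerivAt_conj_u (a n)).mul_const D))
    refine H.deriv.trans ?_
    norm_num
    ring
  · show deriv _ 0 = _
    simp only [e1]
    have H := (hasDerivAt_rIC_v (a n) ha).mul
      ((hasDerivAt_const (0:ℝ) (z * C)).sub ((hasDerivAt_conj_v (a n)).mul_const D))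
    refine H.deriv.trans ?_
    norm_num
    ring
  · show deriv _ 0 = _
    simp only [e2]
    have H := (hasDerivAt_rIC_u (a n) ha).mul
      ((hasDerivAt_const (0:ℝ) D).sub (((hasDerivAt_self_u (a n)).mul_const z).mul_const C))
    refine H.deriv.trans ?_
    norm_num
    ring
  · show deriv _ 0 = _
    simp only [e2]
    have H := (hasDerivAt_rIC_v (a n) ha).mul
      ((hasDerivAt_const (0:ℝ) D).sub (((hasDerivAt_self_v (a n)).mul_const z).mul_const C))
    refine H.deriv.trans ?_
    norm_num
    ring

lemma dAlpha_self (n : ℕ) (z : ℂ) (a : ℕ → ℂ) (ha : Complex.normSq (a n) < 1) :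
    (dAlpha n (phiN (n+1) z) a
      = 1/2 * (starRingEnd ℂ) (a n) * rIC (a n) ^ 3
          * (z * phiN n z a - (starRingEnd ℂ) (a n) * phiNStar n z a)) ∧
    (dAlphaBar n (phiN (n+1) z) a
      = 1/2 * a n * rIC (a n) ^ 3
          * (z * phiN n z a - (starRingEnd ℂ) (a n) * phiNStar n z a)
        - rIC (a n) * phiNStar n z a) ∧
    (dAlpha n (phiNStar (n+1) z) a
      = 1/2 * (starRingEnd ℂ) (a n) * rIC (a n) ^ 3
          * (phiNStar n z a - a n * z * phiN n z a)
        - rIC (a n) * z * phiN n z a) ∧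
    (dAlphaBar n (phiNStar (n+1) z) a
      = 1/2 * a n * rIC (a n) ^ 3
          * (phiNStar n z a - a n * z * phiN n z a)) := by
  obtain ⟨h1, h2, h3, h4⟩ := deriv_self n z a ha
  have hu : ((a n).re : ℂ) = (a n + (starRingEnd ℂ) (a n)) / 2 := by
    rw [Complex.add_conj]; push_cast; ring
  have hv : ((a n).im : ℂ) = -(Complex.I * (a n - (starRingEnd ℂ) (a n))) / 2 := by
    rw [Complex.sub_conj]; push_cast
    linear_combination (((a n).im : ℂ)) * Complex.I_sq
  have hI : Complex.I ^ 2 = -1 := Complex.I_sq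
  set C := phiN n z a
  set D := phiNStar n z a
  set A := a n
  set B := (starRingEnd ℂ) (a n)
  set R := rIC (a n)
  refine ⟨?_, ?_, ?_, ?_⟩
  · simp only [dAlpha]; rw [h1, h2, hu, hv]
    linear_combination (1/2 * ((A - B)/2 * R^3 * (z*C - B*D) - R*D)) * hI
  · simp only [dAlphaBar]; rw [h1, h2, hu, hv]
    linear_combination (-(1/2) * ((A - B)/2 * R^3 * (z*C - B*D)) + 1/2*R*D) * hI
  · simp only [dAlpha]; rw [h3, h4, hu, hv]
    linear_combination (1/2 * ((A - B)/2 * R^3 * (D - A*z*C)) + 1/2*R*z*C) * hI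
  · simp only [dAlphaBar]; rw [h3, h4, hu, hv]
    linear_combination (-(1/2) * ((A - B)/2 * R^3 * (D - A*z*C)) - 1/2*R*z*C) * hI

end CS
namespace CS

lemma neg_update (a : ℕ → ℂ) (k : ℕ) (x : ℂ) :
    (fun j => -(Function.update a k x j)) = Function.update (fun j => -a j) k (-x) := by
  funext j
  by_cases h : j = k
  · subst h; simp
  · simp [Function.update_of_ne h]

lemma duDeriv_psiN (n k : ℕ) (z : ℂ) (a : ℕ → ℂ) :
    duDeriv k (psiN n z) a = -duDeriv k (phiN n z) (fun j => -a j) := by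
  unfold duDeriv
  have h : (fun t : ℝ => psiN n z (Function.update a k (a k + (t:ℂ))))
      = fun t : ℝ => (fun s : ℝ =>
          phiN n z (Function.update (fun j => -a j) k ((fun j => -a j) k + (s:ℂ)))) (-t) := by
    funext t
    rw [psiN_eq]
    show phiN n z (fun j => -Function.update a k (a k + (t:ℂ)) j) = _
    rw [neg_update a k _]
    have harg : -(a k + (t:ℂ)) = -a k + ((-t : ℝ):ℂ) := by push_cast; ring
    rw [harg]
  rw [h]
  simpa using deriv_comp_neg (fun s : ℝ =>
    phiN n z (Function.update (fun j => -a j) k ((fun j => -a j) k + (s:ℂ)))) (0:ℝ)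

lemma dvDeriv_psiN (n k : ℕ) (z : ℂ) (a : ℕ → ℂ) :
    dvDeriv k (psiN n z) a = -dvDeriv k (phiN n z) (fun j => -a j) := by
  unfold dvDeriv
  have h : (fun t : ℝ => psiN n z (Function.update a k (a k + (t:ℂ) * Complex.I)))
      = fun t : ℝ => (fun s : ℝ =>
          phiN n z (Function.update (fun j => -a j) k
            ((fun j => -a j) k + (s:ℂ) * Complex.I))) (-t) := by
    funext t
    rw [psiN_eq]
    show phiN n z (fun j => -Function.update a k (a k + (t:ℂ) * Complex.I) j) = _
    rw [neg_update a k _]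
    have harg : -(a k + (t:ℂ) * Complex.I) = -a k + ((-t : ℝ):ℂ) * Complex.I := by
      push_cast; ring
    rw [harg]
  rw [h]
  simpa using deriv_comp_neg (fun s : ℝ =>
    phiN n z (Function.update (fun j => -a j) k
      ((fun j => -a j) k + (s:ℂ) * Complex.I))) (0:ℝ)

lemma dAlpha_psiN (n k : ℕ) (z : ℂ) (a : ℕ → ℂ) :
    dAlpha k (psiN n z) a = -dAlpha k (phiN n z) (fun j => -a j) := by
  simp only [dAlpha, duDeriv_psiN, dvDeriv_psiN]; ring

lemma dAlphaBar_psiN (n k : ℕ) (z : ℂ) (a : ℕ → ℂ) :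
    dAlphaBar k (psiN n z) a = -dAlphaBar k (phiN n z) (fun j => -a j) := by
  simp only [dAlphaBar, duDeriv_psiN, dvDeriv_psiN]; ring

lemma pb_psiN_neg (n : ℕ) (z w : ℂ) (a : ℕ → ℂ) :
    pb (psiN n z) (psiN n w) a = pb (phiN n z) (phiN n w) (fun j => -a j) := by
  unfold pb
  congr 1
  apply tsum_congr
  intro k
  rw [dAlpha_psiN, dAlphaBar_psiN, dAlpha_psiN, dAlphaBar_psiN]
  have : Complex.normSq (a k) = Complex.normSq (-(a k)) := (Complex.normSq_neg _).symm
  rw [this]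
  ring_nf

/-- truncated Poisson sum -/
noncomputable def Sb (f g : (ℕ → ℂ) → ℂ) (n : ℕ) (a : ℕ → ℂ) : ℂ :=
  ∑ k ∈ Finset.range n, (1 - (Complex.normSq (a k) : ℂ)) *
    (dAlphaBar k f a * dAlpha k g a - dAlpha k f a * dAlphaBar k g a)

lemma Sb_succ (f g : (ℕ → ℂ) → ℂ) (n : ℕ) (a : ℕ → ℂ) :
    Sb f g (n+1) a = Sb f g n a + (1 - (Complex.normSq (a n) : ℂ)) *
      (dAlphaBar n f a * dAlpha n g a - dAlpha n f a * dAlphaBar n g a) := by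
  unfold Sb
  exact Finset.sum_range_succ _ n

lemma pb_phiN_eq_Sb (n : ℕ) (z w : ℂ) (a : ℕ → ℂ) :
    pb (phiN n z) (phiN n w) a = Complex.I * Sb (phiN n z) (phiN n w) n a := by
  unfold pb Sb
  congr 1
  refine tsum_eq_sum ?_
  intro k hk
  have hnk : n ≤ k := Nat.le_of_not_lt (fun h => hk (Finset.mem_range.mpr h))
  rw [dAlpha_phiN_ge n k z a hnk, dAlphaBar_phiN_ge n k z a hnk]
  ring

end CS
namespace CS

lemma master (z w : ℂ) : ∀ (n : ℕ) (a : ℕ → ℂ), (∀ j, Complex.normSq (a j) < 1) →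
    ((z - w) * Sb (phiN n z) (phiN n w) n a
       = (z - w)/4 * (phiN n z a * psiN n w a - psiN n z a * phiN n w a)) ∧
    ((z - w) * Sb (phiN n z) (phiNStar n w) n a
       = (z + w)/2 * (phiN n z a * phiNStar n w a) - w * (phiNStar n z a * phiN n w a)
         - (z - w)/4 * (phiN n z a * psiNStar n w a + psiN n z a * phiNStar n w a)) ∧
    ((z - w) * Sb (phiNStar n z) (phiN n w) n a
       = -z * (phiN n z a * phiNStar n w a) + (z + w)/2 * (phiNStar n z a * phiN n w a)
         + (z - w)/4 * (phiNStar n z a * psiN n w a + psiNStar n z a * phiN n w a)) ∧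
    ((z - w) * Sb (phiNStar n z) (phiNStar n w) n a
       = (z - w)/4 * (psiNStar n z a * phiNStar n w a - phiNStar n z a * psiNStar n w a)) := by
  intro n
  induction n with
  | zero =>
    intro a ha
    simp only [Sb, Finset.range_zero, Finset.sum_empty, phiN_zero, phiNStar_zero,
      psiN_zero, psiNStar_zero, mul_zero]
    refine ⟨by ring, by ring, by ring, by ring⟩
  | succ n ih =>
    intro a ha
    obtain ⟨IH1, IH2, IH3, IH4⟩ := ih a ha
    obtain ⟨dz1, dz2, dz3, dz4⟩ := dAlpha_self n z a (ha n)
    obtain ⟨dw1, dw2, dw3, dw4⟩ := dAlpha_self n w a (ha n)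
    have h0 : (0:ℝ) < 1 - Complex.normSq (a n) := by have := ha n; linarith
    have hXne : ((1 - Complex.normSq (a n) : ℝ) : ℂ) ≠ 0 :=
      Complex.ofReal_ne_zero.mpr (ne_of_gt h0)
    have hR : rIC (a n)^2 * (1 - (Complex.normSq (a n) : ℂ)) = 1 := by
      unfold rIC
      rw [inv_pow, ← Complex.ofReal_pow, Real.sq_sqrt h0.le,
        show (1 - (Complex.normSq (a n) : ℂ)) = ((1 - Complex.normSq (a n) : ℝ) : ℂ) by
          push_cast; ring]
      exact inv_mul_cancel₀ hXne
    have hns : ((Complex.normSq (a n) : ℂ)) = a n * (starRingEnd ℂ) (a n) :=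
      (Complex.mul_conj _).symm
    have hcomb1 : Sb (phiN (n+1) z) (phiN (n+1) w) n a = rIC (a n)^2*z*w * Sb (phiN n z) (phiN n w) n a - rIC (a n)^2*z*((starRingEnd ℂ) (a n)) * Sb (phiN n z) (phiNStar n w) n a - rIC (a n)^2*((starRingEnd ℂ) (a n))*w * Sb (phiNStar n z) (phiN n w) n a + rIC (a n)^2*((starRingEnd ℂ) (a n))^2 * Sb (phiNStar n z) (phiNStar n w) n a := by
      unfold Sb
      rw [Finset.mul_sum, Finset.mul_sum, Finset.mul_sum, Finset.mul_sum]
      simp only [← Finset.sum_sub_distrib, ← Finset.sum_add_distrib]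
      refine Finset.sum_congr rfl ?_
      intro k hk
      have hkn : k ≠ n := by have := Finset.mem_range.mp hk; omega
      obtain ⟨z1, z2, z3, z4⟩ := dAlpha_rec n k hkn z a ha
      obtain ⟨w1, w2, w3, w4⟩ := dAlpha_rec n k hkn w a ha
      rw [z1, z2, w1, w2]
      ring
    have hcomb2 : Sb (phiN (n+1) z) (phiNStar (n+1) w) n a = (-(rIC (a n)^2*z*(a n)*w)) * Sb (phiN n z) (phiN n w) n a + rIC (a n)^2*z * Sb (phiN n z) (phiNStar n w) n a + rIC (a n)^2*(a n)*((starRingEnd ℂ) (a n))*w * Sb (phiNStar n z) (phiN n w) n a - rIC (a n)^2*((starRingEnd ℂ) (a n)) * Sb (phiNStar n z) (phiNStar n w) n a := by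
      unfold Sb
      rw [Finset.mul_sum, Finset.mul_sum, Finset.mul_sum, Finset.mul_sum]
      simp only [← Finset.sum_sub_distrib, ← Finset.sum_add_distrib]
      refine Finset.sum_congr rfl ?_
      intro k hk
      have hkn : k ≠ n := by have := Finset.mem_range.mp hk; omega
      obtain ⟨z1, z2, z3, z4⟩ := dAlpha_rec n k hkn z a ha
      obtain ⟨w1, w2, w3, w4⟩ := dAlpha_rec n k hkn w a ha
      rw [z1, z2, w3, w4]
      ring
    have hcomb3 : Sb (phiNStar (n+1) z) (phiN (n+1) w) n a = (-(rIC (a n)^2*(a n)*z*w)) * Sb (phiN n z) (phiN n w) n a + rIC (a n)^2*(a n)*z*((starRingEnd ℂ) (a n)) * Sb (phiN n z) (phiNStar n w) n a + rIC (a n)^2*w * Sb (phiNStar n z) (phiN n w) n a - rIC (a n)^2*((starRingEnd ℂ) (a n)) * Sb (phiNStar n z) (phiNStar n w) n a := by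
      unfold Sb
      rw [Finset.mul_sum, Finset.mul_sum, Finset.mul_sum, Finset.mul_sum]
      simp only [← Finset.sum_sub_distrib, ← Finset.sum_add_distrib]
      refine Finset.sum_congr rfl ?_
      intro k hk
      have hkn : k ≠ n := by have := Finset.mem_range.mp hk; omega
      obtain ⟨z1, z2, z3, z4⟩ := dAlpha_rec n k hkn z a ha
      obtain ⟨w1, w2, w3, w4⟩ := dAlpha_rec n k hkn w a ha
      rw [z3, z4, w1, w2]
      ring
    have hcomb4 : Sb (phiNStar (n+1) z) (phiNStar (n+1) w) n a = rIC (a n)^2*(a n)^2*z*w * Sb (phiN n z) (phiN n w) n a - rIC (a n)^2*(a n)*z * Sb (phiN n z) (phiNStar n w) n a - rIC (a n)^2*(a n)*w * Sb (phiNStar n z) (phiN n w) n a + rIC (a n)^2 * Sb (phiNStar n z) (phiNStar n w) n a := by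
      unfold Sb
      rw [Finset.mul_sum, Finset.mul_sum, Finset.mul_sum, Finset.mul_sum]
      simp only [← Finset.sum_sub_distrib, ← Finset.sum_add_distrib]
      refine Finset.sum_congr rfl ?_
      intro k hk
      have hkn : k ≠ n := by have := Finset.mem_range.mp hk; omega
      obtain ⟨z1, z2, z3, z4⟩ := dAlpha_rec n k hkn z a ha
      obtain ⟨w1, w2, w3, w4⟩ := dAlpha_rec n k hkn w a ha
      rw [z3, z4, w3, w4]
      ring
    refine ⟨?_, ?_, ?_, ?_⟩
    · rw [Sb_succ, hcomb1, dz1, dz2, dw1, dw2]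
      simp only [phiN_succ, phiNStar_succ, psiN_succ, psiNStar_succ]
      linear_combination ((1)*(rIC (a n))^2*w*z) * IH1 + ((-1)*((starRingEnd ℂ) (a n))*(rIC (a n))^2*z) * IH2 + ((-1)*((starRingEnd ℂ) (a n))*(rIC (a n))^2*w) * IH3
        + ((1)*((starRingEnd ℂ) (a n))^2*(rIC (a n))^2) * IH4 + ((-1/2)*((starRingEnd ℂ) (a n))*(phiN n z a)*(phiNStar n w a)*(rIC (a n))^2*w*z + (1/2)*((starRingEnd ℂ) (a n))*(phiN n z a)*(phiNStar n w a)*(rIC (a n))^2*z^2 + (-1/2)*((starRingEnd ℂ) (a n))*(phiN n w a)*(phiNStar n z a)*(rIC (a n))^2*w*z + (1/2)*((starRingEnd ℂ) (a n))*(phiN n w a)*(phiNStar n z a)*(rIC (a n))^2*w^2) * hR + (0) * hns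
    · rw [Sb_succ, hcomb2, dz1, dz2, dw3, dw4]
      simp only [phiN_succ, phiNStar_succ, psiN_succ, psiNStar_succ]
      linear_combination ((-1)*(a n)*(rIC (a n))^2*w*z) * IH1 + ((1)*(rIC (a n))^2*z) * IH2 + ((1)*(a n)*((starRingEnd ℂ) (a n))*(rIC (a n))^2*w) * IH3
        + ((-1)*((starRingEnd ℂ) (a n))*(rIC (a n))^2) * IH4 + ((1)*(a n)*((starRingEnd ℂ) (a n))*(phiN n w a)*(phiNStar n z a)*(rIC (a n))^2*w*z + (-1)*(a n)*((starRingEnd ℂ) (a n))*(phiN n w a)*(phiNStar n z a)*(rIC (a n))^2*w^2 + (-1/2)*(a n)*(phiN n z a)*(phiN n w a)*(rIC (a n))^2*w*z^2 + (1/2)*(a n)*(phiN n z a)*(phiN n w a)*(rIC (a n))^2*w^2*z + (1/2)*((starRingEnd ℂ) (a n))*(phiNStar n z a)*(phiNStar n w a)*(rIC (a n))^2*w + (-1/2)*((starRingEnd ℂ) (a n))*(phiNStar n z a)*(phiNStar n w a)*(rIC (a n))^2*z) * hR + ((-1)*(phiN n w a)*(phiNStar n z a)*(rIC (a n))^2*w*z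 + (1)*(phiN n w a)*(phiNStar n z a)*(rIC (a n))^2*w^2) * hns
    · rw [Sb_succ, hcomb3, dz3, dz4, dw1, dw2]
      simp only [phiN_succ, phiNStar_succ, psiN_succ, psiNStar_succ]
      linear_combination ((-1)*(a n)*(rIC (a n))^2*w*z) * IH1 + ((1)*(a n)*((starRingEnd ℂ) (a n))*(rIC (a n))^2*z) * IH2 + ((1)*(rIC (a n))^2*w) * IH3
        + ((-1)*((starRingEnd ℂ) (a n))*(rIC (a n))^2) * IH4 + ((1)*(a n)*((starRingEnd ℂ) (a n))*(phiN n z a)*(phiNStar n w a)*(rIC (a n))^2*w*z + (-1)*(a n)*((starRingEnd ℂ) (a n))*(phiN n z a)*(phiNStar n w a)*(rIC (a n))^2*z^2 + (1/2)*(a n)*(phiN n z a)*(phiN n w a)*(rIC (a n))^2*w*z^2 + (-1/2)*(a n)*(phiN n z a)*(phiN n w a)*(rIC (a n))^2*w^2*z + (-1/2)*((starRingEnd ℂ) (a n))*(phiNStar n z a)*(phiNStar n w a)*(rIC (a n))^2*w + (1/2)*((starRingEnd ℂ) (a n))*(phiNStar n z a)*(phiNStar n w a)*(rIC (a n))^2*z)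 * hR + ((-1)*(phiN n z a)*(phiNStar n w a)*(rIC (a n))^2*w*z + (1)*(phiN n z a)*(phiNStar n w a)*(rIC (a n))^2*z^2) * hns
    · rw [Sb_succ, hcomb4, dz3, dz4, dw3, dw4]
      simp only [phiN_succ, phiNStar_succ, psiN_succ, psiNStar_succ]
      linear_combination ((1)*(a n)^2*(rIC (a n))^2*w*z) * IH1 + ((-1)*(a n)*(rIC (a n))^2*z) * IH2 + ((-1)*(a n)*(rIC (a n))^2*w) * IH3
        + ((1)*(rIC (a n))^2) * IH4 + ((-1/2)*(a n)*(phiN n z a)*(phiNStar n w a)*(rIC (a n))^2*w*z + (1/2)*(a n)*(phiN n z a)*(phiNStar n w a)*(rIC (a n))^2*z^2 + (-1/2)*(a n)*(phiN n w a)*(phiNStar n z a)*(rIC (a n))^2*w*z + (1/2)*(a n)*(phiN n w a)*(phiNStar n z a)*(rIC (a n))^2*w^2) * hR + (0) * hns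

end CS
theorem poisson_phi_phi (n : ℕ) (z w : ℂ) (hzw : z ≠ w) (a : ℕ → ℂ) (ha : ∀ k, ‖a k‖ < 1) :
    pb (phiN n z) (phiN n w) a
        = Complex.I / 4 * (phiN n z a * psiN n w a - phiN n w a * psiN n z a)
    ∧ -pb (psiN n z) (psiN n w) a
        = Complex.I / 4 * (phiN n z a * psiN n w a - phiN n w a * psiN n z a) := by
  have hns : ∀ k, Complex.normSq (a k) < 1 := by
    intro k
    have h1 := Complex.sq_norm (a k)
    nlinarith [norm_nonneg (a k), ha k]
  have hzw' : z - w ≠ 0 := sub_ne_zero.mpr hzw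
  obtain ⟨M1, -, -, -⟩ := CS.master z w n a hns
  have hS : CS.Sb (phiN n z) (phiN n w) n a
      = 1/4 * (phiN n z a * psiN n w a - psiN n z a * phiN n w a) := by
    apply mul_left_cancel₀ hzw'
    rw [M1]; ring
  constructor
  · rw [CS.pb_phiN_eq_Sb, hS]; ring
  · have hnsneg : ∀ k, Complex.normSq ((fun j => -a j) k) < 1 := by
      intro k; simpa [Complex.normSq_neg] using hns k
    obtain ⟨M1n, -, -, -⟩ := CS.master z w n (fun j => -a j) hnsneg
    have hSn : CS.Sb (phiN n z) (phiN n w) n (fun j => -a j)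
        = 1/4 * (phiN n z (fun j => -a j) * psiN n w (fun j => -a j)
            - psiN n z (fun j => -a j) * phiN n w (fun j => -a j)) := by
      apply mul_left_cancel₀ hzw'
      rw [M1n]; ring
    have e1 : ∀ u : ℂ, phiN n u (fun j => -a j) = psiN n u a :=
      fun u => (CS.psiN_eq n u a).symm
    have e2 : ∀ u : ℂ, psiN n u (fun j => -a j) = phiN n u a := by
      intro u
      rw [CS.psiN_eq]
      have : (fun k => -(fun j => -a j) k) = a := by funext j; simp
      rw [this]
    rw [CS.pb_psiN_neg, CS.pb_phiN_eq_Sb, hSn, e1 z, e1 w, e2 z, e2 w]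
    ring
end
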